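/- Let a < b be real numbers and let u : ℝ → ℝ be continuous on [a,b] with finite pointwise variation V := Var(u; [a,b]) < ∞. Let Γ := { (t, u(t)) : t ∈ [a,b] } ⊆ ℝ². Then max(b − a, V) ≤ H¹(Γ) ≤ (b − a) + V, where H¹ denotes the one-dimensional Hausdorff measure on ℝ². (This is the 0-dimensional instance of the inequalities Var(S) ≤ M(S) and M(S) ≤ ∫ M(S(t)) dt + Var(S) between variation and mass of a space-time integral current.) -/

import Mathlib

/-!
The graph is the image of the injective continuous curve `γ t = (t, u t)`, and for such a curve
`H¹(γ '' [a,b]) = Var(γ; [a,b])`. For `≥`, the arcs of `γ` over the intervals of a partition are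
connected, so each has `H¹` at least its chord, and they overlap only at endpoints. For `≤`, `γ` is
a 1-Lipschitz function of its arclength parameter, whose range has diameter at most `Var γ`.
The coordinate projections are 1-Lipschitz, so `max (b - a) V ≤ Var γ`, and `‖x‖ ≤ |x₀| + |x₁|`
gives `Var γ ≤ (b - a) + V`.
-/

open MeasureTheory Set
open scoped NNReal

theorem EuclideanSpace.edist_le_sum_edist {ι : Type*} [Fintype ι] (x y : EuclideanSpace ℝ ι) :
    edist x y ≤ ∑ i, edist (x i) (y i) := by
  have hdist : dist x y ≤ ∑ i, dist (x i) (y i) := by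
    rw [EuclideanSpace.dist_eq, Real.sqrt_le_left (Finset.sum_nonneg fun i _ => dist_nonneg)]
    exact Finset.sum_sq_le_sq_sum_of_nonneg fun i _ => dist_nonneg
  simp only [edist_dist]
  rw [← ENNReal.ofReal_sum_of_nonneg fun i _ => dist_nonneg]
  exact ENNReal.ofReal_le_ofReal hdist

theorem eVariationOn_le_sum_of_edist_le {α ι E F : Type*} [LinearOrder α]
    [PseudoEMetricSpace E] [PseudoEMetricSpace F] {f : α → E} {g : ι → α → F} {s : Set α}
    {t : Finset ι} (h : ∀ x ∈ s, ∀ y ∈ s, edist (f x) (f y) ≤ ∑ i ∈ t, edist (g i x) (g i y)) :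
    eVariationOn f s ≤ ∑ i ∈ t, eVariationOn (g i) s := by
  refine iSup_le fun ⟨n, u, hu, us⟩ => ?_
  calc ∑ j ∈ Finset.range n, edist (f (u (j + 1))) (f (u j))
      ≤ ∑ j ∈ Finset.range n, ∑ i ∈ t, edist (g i (u (j + 1))) (g i (u j)) :=
        Finset.sum_le_sum fun j _ => h _ (us _) _ (us _)
    _ = ∑ i ∈ t, ∑ j ∈ Finset.range n, edist (g i (u (j + 1))) (g i (u j)) := Finset.sum_comm
    _ ≤ ∑ i ∈ t, eVariationOn (g i) s := Finset.sum_le_sum fun i _ => eVariationOn.sum_le hu us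

theorem HasConstantSpeedOnWith.lipschitzOnWith {E : Type*} [PseudoEMetricSpace E] {f : ℝ → E}
    {s : Set ℝ} {l : ℝ≥0} (h : HasConstantSpeedOnWith f s l) : LipschitzOnWith l f s := by
  have key : ∀ x ∈ s, ∀ y ∈ s, x ≤ y → edist (f x) (f y) ≤ l * edist x y := by
    intro x hx y hy hxy
    calc edist (f x) (f y) ≤ eVariationOn f (s ∩ Icc x y) :=
          eVariationOn.edist_le f ⟨hx, le_rfl, hxy⟩ ⟨hy, hxy, le_rfl⟩
      _ = l * edist x y := by
          rw [h hx hy, ENNReal.ofReal_mul l.coe_nonneg, ENNReal.ofReal_coe_nnreal, edist_comm,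
            edist_dist, Real.dist_eq, abs_of_nonneg (sub_nonneg.2 hxy)]
  intro x hx y hy
  rcases le_total x y with hxy | hyx
  · exact key x hx y hy hxy
  · rw [edist_comm, edist_comm x]
    exact key y hy x hx hyx

theorem naturalParameterization_image_variationOnFromTo_image {α E : Type*} [LinearOrder α]
    [EMetricSpace E] {f : α → E} {s : Set α} (hf : LocallyBoundedVariationOn f s) {a : α}
    (ha : a ∈ s) :
    naturalParameterization f s a '' (variationOnFromTo f s a '' s) = f '' s := by
  rw [image_image]
  exact image_congr fun b hb => edist_eq_zero.1 (edist_naturalParameterization_eq_zero hf ha hb)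

theorem edist_variationOnFromTo_le_eVariationOn {α E : Type*} [LinearOrder α]
    [PseudoEMetricSpace E] {f : α → E} {s : Set α} (hf : BoundedVariationOn f s) {a b c : α}
    (ha : a ∈ s) (hb : b ∈ s) (hc : c ∈ s) :
    edist (variationOnFromTo f s a b) (variationOnFromTo f s a c) ≤ eVariationOn f s := by
  rw [edist_dist, Real.dist_eq, variationOnFromTo.sub_right hf.locallyBoundedVariationOn ha hb hc,
    ← ENNReal.ofReal_toReal hf]
  exact ENNReal.ofReal_le_ofReal (variationOnFromTo.abs_le_eVariationOn hf)

theorem hausdorffMeasure_image_le_eVariationOn {α X : Type*} [LinearOrder α] [EMetricSpace X]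
    [MeasurableSpace X] [BorelSpace X] (γ : α → X) (s : Set α) :
    μH[1] (γ '' s) ≤ eVariationOn γ s := by
  rcases s.eq_empty_or_nonempty with rfl | ⟨a, ha⟩
  · simp
  by_cases hγ : BoundedVariationOn γ s
  swap
  · rw [BoundedVariationOn, not_ne_iff] at hγ
    simp [hγ]
  set ψ := variationOnFromTo γ s a
  calc μH[1] (γ '' s) = μH[1] (naturalParameterization γ s a '' (ψ '' s)) := by
        rw [naturalParameterization_image_variationOnFromTo_image
          hγ.locallyBoundedVariationOn ha]
    _ ≤ μH[1] (ψ '' s) := by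
        simpa using ((has_unit_speed_naturalParameterization γ hγ.locallyBoundedVariationOn
          ha).lipschitzOnWith.hausdorffMeasure_image_le zero_le_one)
    _ ≤ Metric.ediam (ψ '' s) := by
        rw [hausdorffMeasure_real]
        exact Real.volume_le_diam _
    _ ≤ eVariationOn γ s := by
        refine Metric.ediam_le ?_
        rintro _ ⟨x, hx, rfl⟩ _ ⟨y, hy, rfl⟩
        exact edist_variationOnFromTo_le_eVariationOn hγ ha hx hy

section

variable {X : Type*} [MetricSpace X] [MeasurableSpace X] [BorelSpace X]

theorem edist_le_hausdorffMeasure_of_isPreconnected {S : Set X} (hS : IsPreconnected S)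
    {x y : X} (hx : x ∈ S) (hy : y ∈ S) : edist x y ≤ μH[1] S := by
  have hlip : LipschitzWith 1 (dist x) := LipschitzWith.dist_right x
  have hsub : Icc 0 (dist x y) ⊆ dist x '' S :=
    (hS.image _ hlip.continuous.continuousOn).Icc_subset ⟨x, hx, dist_self x⟩ ⟨y, hy, rfl⟩
  calc edist x y = μH[1] (Icc 0 (dist x y)) := by
        rw [hausdorffMeasure_real, Real.volume_Icc, sub_zero, edist_dist]
    _ ≤ μH[1] (dist x '' S) := measure_mono hsub
    _ ≤ μH[1] S := by
        simpa using hlip.hausdorffMeasure_image_le zero_le_one S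

theorem eVariationOn_le_hausdorffMeasure_image {γ : ℝ → X} {s : Set ℝ} (hs : s.OrdConnected)
    (hγ : ContinuousOn γ s) (hinj : InjOn γ s) : eVariationOn γ s ≤ μH[1] (γ '' s) := by
  have := Measure.nullSingletonClass_hausdorff X one_pos
  refine iSup_le fun ⟨n, t, ht, hts⟩ => ?_
  set A : ℕ → Set X := fun i => γ '' Icc (t i) (t (i + 1))
  have hIcc : ∀ i, Icc (t i) (t (i + 1)) ⊆ s := fun i => hs.out (hts i) (hts (i + 1))
  have hA_inter : ∀ i j, i < j → A i ∩ A j ⊆ {γ (t j)} := by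
    rintro i j hij _ ⟨⟨x, hx, rfl⟩, ⟨y, hy, hyx⟩⟩
    obtain rfl := hinj (hIcc j hy) (hIcc i hx) hyx
    have : t (i + 1) ≤ t j := ht hij
    rw [le_antisymm (hx.2.trans this) hy.1]
    rfl
  have hA_disj : (Finset.range n : Set ℕ).Pairwise (Function.onFun (AEDisjoint μH[1]) A) := by
    intro i _ j _ hij
    rcases hij.lt_or_gt with h | h
    · exact measure_mono_null (hA_inter i j h) (measure_singleton _)
    · exact measure_mono_null (inter_comm (A i) _ ▸ hA_inter j i h) (measure_singleton _)
  calc ∑ i ∈ Finset.range n, edist (γ (t (i + 1))) (γ (t i))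
      ≤ ∑ i ∈ Finset.range n, μH[1] (A i) := by
        refine Finset.sum_le_sum fun i _ => ?_
        rw [edist_comm]
        exact edist_le_hausdorffMeasure_of_isPreconnected
          (isPreconnected_Icc.image γ (hγ.mono (hIcc i)))
          (mem_image_of_mem γ (left_mem_Icc.2 (ht i.le_succ)))
          (mem_image_of_mem γ (right_mem_Icc.2 (ht i.le_succ)))
    _ = μH[1] (⋃ i ∈ Finset.range n, A i) := by
        refine (measure_biUnion_finset₀ hA_disj fun i _ => ?_).symm
        exact (isCompact_Icc.image_of_continuousOn (hγ.mono (hIcc i))).measurableSet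
          |>.nullMeasurableSet
    _ ≤ μH[1] (γ '' s) := measure_mono (iUnion₂_subset fun i _ => image_mono (hIcc i))

theorem hausdorffMeasure_image_eq_eVariationOn {γ : ℝ → X} {s : Set ℝ} (hs : s.OrdConnected)
    (hγ : ContinuousOn γ s) (hinj : InjOn γ s) : μH[1] (γ '' s) = eVariationOn γ s :=
  (hausdorffMeasure_image_le_eVariationOn γ s).antisymm
    (eVariationOn_le_hausdorffMeasure_image hs hγ hinj)

end

theorem graph_length_bounds_general {a b : ℝ} (u : ℝ → ℝ)
    (hu : ContinuousOn u (Set.Icc a b)) :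
    max (ENNReal.ofReal (b - a)) (eVariationOn u (Set.Icc a b))
        ≤ μH[1] ((fun t : ℝ => (EuclideanSpace.equiv (Fin 2) ℝ).symm ![t, u t]) '' Set.Icc a b)
      ∧ μH[1] ((fun t : ℝ => (EuclideanSpace.equiv (Fin 2) ℝ).symm ![t, u t]) '' Set.Icc a b)
        ≤ ENNReal.ofReal (b - a) + eVariationOn u (Set.Icc a b) := by
  set γ : ℝ → EuclideanSpace ℝ (Fin 2) := fun t => (EuclideanSpace.equiv (Fin 2) ℝ).symm ![t, u t]
  have hγ : ContinuousOn γ (Icc a b) := by fun_prop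
  have hinj : Function.Injective γ := fun s t h => congrArg (· 0) h
  have hfst : eVariationOn (fun t => γ t 0) (Icc a b) = ENNReal.ofReal (b - a) :=
    eVariationOn_id_Icc a b
  have hsnd : (fun t => γ t 1) = u := rfl
  have hcoord (i : Fin 2) : eVariationOn (fun t => γ t i) (Icc a b) ≤ eVariationOn γ (Icc a b) := by
    simpa [Function.comp_def] using (LipschitzWith.of_edist_le (PiLp.edist_apply_le · · i))
      |>.lipschitzOnWith.comp_eVariationOn_le (mapsTo_univ γ (Icc a b))
  rw [hausdorffMeasure_image_eq_eVariationOn ordConnected_Icc hγ hinj.injOn]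
  refine ⟨max_le (hfst ▸ hcoord 0) (hsnd ▸ hcoord 1), ?_⟩
  calc eVariationOn γ (Icc a b) ≤ ∑ i, eVariationOn (fun t => γ t i) (Icc a b) :=
        eVariationOn_le_sum_of_edist_le fun x _ y _ => EuclideanSpace.edist_le_sum_edist _ _
    _ = ENNReal.ofReal (b - a) + eVariationOn u (Icc a b) := by
        rw [Fin.sum_univ_two, hfst, hsnd]

/-- For `u : ℝ → ℝ` continuous on `[a,b]` (`a < b`) with finite pointwise variation
`V = Var(u;[a,b])`, and `Γ = {(t, u(t)) : t ∈ [a,b]} ⊆ ℝ²` the graph of `u`: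
`max(b − a, V) ≤ H¹(Γ) ≤ (b − a) + V`. -/
theorem graph_length_bounds {a b : ℝ} (hab : a < b) (u : ℝ → ℝ)
    (hu : ContinuousOn u (Set.Icc a b))
    (hV : eVariationOn u (Set.Icc a b) ≠ ⊤) :
    max (ENNReal.ofReal (b - a)) (eVariationOn u (Set.Icc a b))
        ≤ μH[1] ((fun t : ℝ => (EuclideanSpace.equiv (Fin 2) ℝ).symm ![t, u t]) '' Set.Icc a b)
      ∧ μH[1] ((fun t : ℝ => (EuclideanSpace.equiv (Fin 2) ℝ).symm ![t, u t]) '' Set.Icc a b)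
        ≤ ENNReal.ofReal (b - a) + eVariationOn u (Set.Icc a b) :=
  graph_length_bounds_general u hu
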